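/- Let M₁, M₂, L be positive natural numbers, u ∈ Fin L, α : Fin L → ℂ with α_u ≠ 0, β, β₁ ∈ ℂ with β₁ ≠ 0, ω, μ : Fin L → ℝ, and φ₁, θ₁, φ, θ ∈ ℝ. Define: Λ := diagonal(α); A_M ∈ ℂ^{(M₁M₂)×L} with l-th column a_{M₁,M₂}(ω_l, μ_l); h̃ := β · a_{M₁,M₂}(φ, θ); γ_l := conj(α_l)/conj(α_u); Λ_rec := the entrywise conjugate of the diagonal matrix conj(α_u)·conj(β₁)·diagonal(γ) (so Λ_rec = diagonal(l ↦ β₁·α_l)); A_Δ ∈ ℂ^{(M₁M₂)×L} with l-th column a_{M₁,M₂}(ω_l − ω_u, μ_l − μ_u); A_rec := diagonal(a_{M₁,M₂}(ω_u − φ₁, μ_u − θ₁)) · A_Δ; and h̃_rec := (1/β₁) · diagonal(a_{M₁,M₂}(−φ₁, −θ₁)) · h̃. Then Λ · A_Mᴴ · diagonal(h̃) = Λ_rec · A_recᴴ · diagonal(h̃_rec). -/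
import Mathlib


open Matrix

/-- 1D steering vector: `[a_P(u)]_p = exp(−2πi·p·u)`. -/
noncomputable def steer (P : ℕ) (u : ℝ) : Fin P → ℂ :=
  fun p => Complex.exp (-2 * Real.pi * Complex.I * (p : ℕ) * (u : ℂ))

/-- 2D (UPA) steering vector `a_{F₁,F₂}(x,y) = a_{F₁}(x) ⊗ a_{F₂}(y)`. -/
noncomputable def steer2 (F₁ F₂ : ℕ) (x y : ℝ) : Fin F₁ × Fin F₂ → ℂ :=
  fun p => steer F₁ x p.1 * steer F₂ y p.2

lemma steer_add (P : ℕ) (x y : ℝ) (p : Fin P) :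
    steer P (x + y) p = steer P x p * steer P y p := by
  unfold steer
  rw [← Complex.exp_add]
  congr 1
  push_cast
  ring

lemma conj_steer (P : ℕ) (x : ℝ) (p : Fin P) :
    (starRingEnd ℂ) (steer P x p) = steer P (-x) p := by
  unfold steer
  rw [← Complex.exp_conj]
  congr 1
  simp only [_root_.map_mul, map_neg, map_ofNat, Complex.conj_I,
    Complex.conj_ofReal, map_natCast, Complex.ofReal_neg]
  ring

lemma steer2_add (F₁ F₂ : ℕ) (x y x' y' : ℝ) (p : Fin F₁ × Fin F₂) :
    steer2 F₁ F₂ (x + x') (y + y') p = steer2 F₁ F₂ x y p * steer2 F₁ F₂ x' y' p := by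
  unfold steer2
  rw [steer_add, steer_add]
  ring

lemma conj_steer2 (F₁ F₂ : ℕ) (x y : ℝ) (p : Fin F₁ × Fin F₂) :
    (starRingEnd ℂ) (steer2 F₁ F₂ x y p) = steer2 F₁ F₂ (-x) (-y) p := by
  unfold steer2
  rw [_root_.map_mul, conj_steer, conj_steer]

/-- Equations (41)–(43) of the paper: the reconstructed substitutes
`Λ_rec`, `A_rec`, `h̃_rec` built from the typical user's estimates reproduce
the exact measurement matrix `Λ·A_Mᴴ·Diag{h̃}`. -/
theorem reconstruction_identity {M₁ M₂ L : ℕ}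
    (hM₁ : 0 < M₁) (hM₂ : 0 < M₂) (hL : 0 < L)
    (u : Fin L) (α : Fin L → ℂ) (hα : α u ≠ 0) (β β₁ : ℂ) (hβ₁ : β₁ ≠ 0)
    (ω μ : Fin L → ℝ) (φ₁ θ₁ φ θ : ℝ) :
    let Λ : Matrix (Fin L) (Fin L) ℂ := Matrix.diagonal α
    let A_M : Matrix (Fin M₁ × Fin M₂) (Fin L) ℂ :=
      Matrix.of fun p l => steer2 M₁ M₂ (ω l) (μ l) p
    let htilde : Fin M₁ × Fin M₂ → ℂ := β • steer2 M₁ M₂ φ θ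
    let γ : Fin L → ℂ := fun l => (starRingEnd ℂ) (α l) / (starRingEnd ℂ) (α u)
    let Λrec : Matrix (Fin L) (Fin L) ℂ :=
      ((((starRingEnd ℂ) (α u) * (starRingEnd ℂ) β₁) • Matrix.diagonal γ).map
        (starRingEnd ℂ))
    let AΔ : Matrix (Fin M₁ × Fin M₂) (Fin L) ℂ :=
      Matrix.of fun p l => steer2 M₁ M₂ (ω l - ω u) (μ l - μ u) p
    let Arec : Matrix (Fin M₁ × Fin M₂) (Fin L) ℂ :=
      Matrix.diagonal (steer2 M₁ M₂ (ω u - φ₁) (μ u - θ₁)) * AΔ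
    let hrec : Fin M₁ × Fin M₂ → ℂ :=
      (1 / β₁) • (Matrix.diagonal (steer2 M₁ M₂ (-φ₁) (-θ₁))).mulVec htilde
    Λ * A_Mᴴ * Matrix.diagonal htilde = Λrec * Arecᴴ * Matrix.diagonal hrec := by
  intro Λ A_M htilde γ Λrec AΔ Arec hrec
  have hcu : (starRingEnd ℂ) (α u) ≠ 0 := by simpa using hα
  have hΛrec : Λrec = Matrix.diagonal (fun l => β₁ * α l) := by
    ext a b
    simp only [Λrec, γ, Matrix.map_apply, Matrix.smul_apply, Matrix.diagonal_apply,
      smul_eq_mul]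
    by_cases h : a = b
    · simp only [h, if_true]
      rw [_root_.map_mul, _root_.map_mul, map_div₀, Complex.conj_conj,
        Complex.conj_conj, Complex.conj_conj]
      field_simp
    · simp [h]
  rw [hΛrec]
  ext i p
  simp only [Λ, A_M, htilde, AΔ, Arec, hrec, Matrix.diagonal_mul,
    Matrix.mul_diagonal, Matrix.conjTranspose_apply, Matrix.of_apply,
    Pi.smul_apply, smul_eq_mul, Matrix.mulVec_diagonal, Complex.star_def]
  have key : steer2 M₁ M₂ (-(ω i)) (-(μ i)) p =
      steer2 M₁ M₂ (-(ω u - φ₁)) (-(μ u - θ₁)) p *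
        steer2 M₁ M₂ (-(ω i - ω u)) (-(μ i - μ u)) p *
        steer2 M₁ M₂ (-φ₁) (-θ₁) p := by
    rw [← steer2_add, ← steer2_add]
    congr 1 <;> ring
  rw [conj_steer2, _root_.map_mul, conj_steer2, conj_steer2, key]
  field_simp
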